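/- Let H ∈ (0,1). The function φ(θ) = φ(cos θ, sin θ) satisfies φ(θ) / (π/4 − θ)^{2H} → 1 as θ ↑ π/4. -/

import Mathlib

open MeasureTheory Real Filter Topology

noncomputable section

/-- `φ(t,v) = t^{2H} v^{2H} − ¼(t^{2H} + v^{2H} − |t−v|^{2H})²`. -/
def phiFun (H t v : ℝ) : ℝ :=
  t ^ (2 * H) * v ^ (2 * H) - (t ^ (2 * H) + v ^ (2 * H) - |t - v| ^ (2 * H)) ^ 2 / 4

/-!
Writing `a = t^{2H}`, `b = v^{2H}`, `d = |t - v|^{2H}`, one has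
`φ = (a + b) d / 2 - (a - b)² / 4 - d² / 4`.
Along `t = cos θ`, `v = sin θ` near `π/4`, with `ε = π/4 - θ`, both `a - b` and `cos θ - sin θ`
vanish to first order in `ε`, so `d / ε^{2H} → √2^{2H}` while `(a - b)² / ε^{2H} = O(ε^{2 - 2H})`
and `d → 0`. Hence `φ / ε^{2H} → (√2/2)^{2H} · √2^{2H} = 1`.
-/

theorem phiFun_eq (H t v : ℝ) :
    phiFun H t v = (t ^ (2 * H) + v ^ (2 * H)) / 2 * |t - v| ^ (2 * H)
      - (t ^ (2 * H) - v ^ (2 * H)) ^ 2 / 4 - |t - v| ^ (2 * H) * |t - v| ^ (2 * H) / 4 := by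
  unfold phiFun
  ring

section VanishingAt

variable {f : ℝ → ℝ} {f' x : ℝ}

theorem HasDerivAt.tendsto_abs_rpow_div_abs_sub_rpow (hf : HasDerivAt f f' x) (hfx : f x = 0)
    {r : ℝ} (hr : 0 ≤ r) :
    Tendsto (fun y => |f y| ^ r / |y - x| ^ r) (𝓝[≠] x) (𝓝 (|f'| ^ r)) := by
  have hslope := (hasDerivAt_iff_tendsto_slope.mp hf).abs.rpow_const (Or.inr hr)
  refine hslope.congr fun y => ?_
  rw [slope_def_field, hfx, sub_zero, abs_div, div_rpow (abs_nonneg _) (abs_nonneg _)]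

theorem HasDerivAt.tendsto_abs_rpow_div_abs_sub_rpow_zero (hf : HasDerivAt f f' x)
    (hfx : f x = 0) {r s : ℝ} (hr : 0 ≤ r) (hsr : s < r) :
    Tendsto (fun y => |f y| ^ r / |y - x| ^ s) (𝓝[≠] x) (𝓝 0) := by
  have hdist : Tendsto (fun y => |y - x| ^ (r - s)) (𝓝[≠] x) (𝓝 0) := by
    have := ((continuous_sub_right x).abs.continuousAt (x := x)).rpow_const
      (p := r - s) (Or.inr (sub_nonneg.mpr hsr.le))
    simpa [zero_rpow (sub_ne_zero.mpr hsr.ne')] using this.tendsto.mono_left nhdsWithin_le_nhds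
  have hprod := (hf.tendsto_abs_rpow_div_abs_sub_rpow hfx hr).mul hdist
  rw [mul_zero] at hprod
  refine hprod.congr' ?_
  filter_upwards [self_mem_nhdsWithin] with y (hy : y ≠ x)
  have hpos : 0 < |y - x| := abs_pos.mpr (sub_ne_zero.mpr hy)
  rw [rpow_sub hpos]
  field_simp

end VanishingAt

theorem tendsto_phiFun_div_abs_sub_rpow {H : ℝ} (hH₀ : 0 < H) (hH₁ : H < 1) {f g : ℝ → ℝ}
    {f' g' x : ℝ} (hf : HasDerivAt f f' x) (hg : HasDerivAt g g' x) (hfg : f x = g x)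
    (hfx : f x ≠ 0) :
    Tendsto (fun y => phiFun H (f y) (g y) / |y - x| ^ (2 * H)) (𝓝[≠] x)
      (𝓝 (f x ^ (2 * H) * |f' - g'| ^ (2 * H))) := by
  have hgx : g x ≠ 0 := hfg ▸ hfx
  have hsum : Tendsto (fun y => (f y ^ (2 * H) + g y ^ (2 * H)) / 2) (𝓝[≠] x)
      (𝓝 (f x ^ (2 * H))) := by
    have hcont : ContinuousAt (fun y => (f y ^ (2 * H) + g y ^ (2 * H)) / 2) x :=
      ((hf.continuousAt.rpow_const (Or.inl hfx)).add
        (hg.continuousAt.rpow_const (Or.inl hgx))).div_const 2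
    have := hcont.tendsto
    rw [← hfg, add_self_div_two] at this
    exact this.mono_left nhdsWithin_le_nhds
  have hdiff : Tendsto (fun y => |f y - g y| ^ (2 * H) / |y - x| ^ (2 * H)) (𝓝[≠] x)
      (𝓝 (|f' - g'| ^ (2 * H))) :=
    (hf.sub hg).tendsto_abs_rpow_div_abs_sub_rpow (sub_eq_zero.mpr hfg) (by positivity)
  have hpowdiff : Tendsto (fun y => (f y ^ (2 * H) - g y ^ (2 * H)) ^ 2 / |y - x| ^ (2 * H))
      (𝓝[≠] x) (𝓝 0) := by
    have hderiv : HasDerivAt (fun y => f y ^ (2 * H) - g y ^ (2 * H)) _ x :=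
      (hf.rpow_const (Or.inl hfx)).sub (hg.rpow_const (Or.inl hgx))
    have := hderiv.tendsto_abs_rpow_div_abs_sub_rpow_zero (by rw [hfg, sub_self]) zero_le_two
      (by linarith : 2 * H < 2)
    simpa only [rpow_two, sq_abs] using this
  have hdist : Tendsto (fun y => |f y - g y| ^ (2 * H)) (𝓝[≠] x) (𝓝 0) := by
    have hcont : ContinuousAt (fun y => |f y - g y| ^ (2 * H)) x :=
      (hf.continuousAt.sub hg.continuousAt).abs.rpow_const (Or.inr (by positivity))
    have := hcont.tendsto
    rw [hfg, sub_self, abs_zero, zero_rpow (by positivity)] at this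
    exact this.mono_left nhdsWithin_le_nhds
  have hlim := ((hsum.mul hdiff).sub (hpowdiff.div_const 4)).sub ((hdist.mul hdiff).div_const 4)
  rw [zero_div, zero_mul, zero_div, sub_zero, sub_zero] at hlim
  refine hlim.congr' ?_
  filter_upwards [self_mem_nhdsWithin] with y (hy : y ≠ x)
  have hpos : 0 < |y - x| ^ (2 * H) := rpow_pos_of_pos (abs_pos.mpr (sub_ne_zero.mpr hy)) _
  rw [phiFun_eq]
  field_simp

theorem cos_pi_div_four_rpow_mul_abs_neg_sin_sub_cos (r : ℝ) :
    cos (π / 4) ^ r * |-sin (π / 4) - cos (π / 4)| ^ r = 1 := by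
  have hsqrt : √2 * √2 = 2 := mul_self_sqrt zero_le_two
  rw [cos_pi_div_four, sin_pi_div_four, ← mul_rpow (by positivity) (abs_nonneg _),
    abs_of_neg (by linarith [sqrt_pos.mpr (zero_lt_two' ℝ)])]
  convert one_rpow r using 2
  linear_combination hsqrt / 2

/-- For `H ∈ (0,1)`, `φ(cos θ, sin θ) / (π/4 − θ)^{2H} → 1` as `θ ↑ π/4`. -/
theorem phi_theta_asymp_pi_div_four (H : ℝ) (hH : H ∈ Set.Ioo (0 : ℝ) 1) :
    Tendsto (fun θ : ℝ => phiFun H (Real.cos θ) (Real.sin θ) / (Real.pi / 4 - θ) ^ (2 * H))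
      (𝓝[<] (Real.pi / 4)) (𝓝 1) := by
  have hlim := tendsto_phiFun_div_abs_sub_rpow hH.1 hH.2 (hasDerivAt_cos (π / 4))
    (hasDerivAt_sin (π / 4)) (by rw [cos_pi_div_four, sin_pi_div_four])
    (by rw [cos_pi_div_four]; positivity)
  rw [cos_pi_div_four_rpow_mul_abs_neg_sin_sub_cos] at hlim
  refine (hlim.mono_left (nhdsLT_le_nhdsNE _)).congr' ?_
  filter_upwards [self_mem_nhdsWithin] with θ (hθ : θ < π / 4)
  rw [abs_sub_comm, abs_of_pos (sub_pos.mpr hθ)]
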